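/- For every integer $m \geq 2$ and every $\varepsilon \in (0, 1 - 1/m]$, there exist a finite alphabet $\mathcal{X}$, a finite alphabet $\mathcal{Y}$ with $|\mathcal{Y}| = m$, and joint probability distributions $p_{XY}, q_{XY}$ on $\mathcal{X} \times \mathcal{Y}$ such that $\tfrac{1}{2}\sum_{x,y}|p_{XY}(x,y) - q_{XY}(x,y)| \leq \varepsilon$ and $|H(Y|X)_p - H(Y|X)_q| = \varepsilon \log_2(m - 1) + h_2(\varepsilon)$. -/

import Mathlib

open scoped BigOperators

/-- Conditional Shannon entropy H(Y|X) of a joint distribution `p` on `𝓧 × 𝓨`,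
with the sum restricted to those `x` whose marginal `pₓ(x)` is positive and with
the convention `0 · log₂ 0 = 0` (automatic since `Real.logb 2 0 = 0`). -/
noncomputable def condShannonEntropy {𝓧 𝓨 : Type*} [Fintype 𝓧] [Fintype 𝓨]
    (p : 𝓧 → 𝓨 → ℝ) : ℝ :=
  -∑ x, if 0 < ∑ y, p x y then
      (∑ y, p x y) *
        ∑ y, (p x y / ∑ y', p x y') * Real.logb 2 (p x y / ∑ y', p x y')
    else 0

noncomputable def binEntropy (ε : ℝ) : ℝ :=
  -ε * Real.logb 2 ε - (1 - ε) * Real.logb 2 (1 - ε)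

/-!
Take a one-point `𝓧` and `𝓨 = Fin m`. Let `q` move mass `ε` away from the letter `0`, spread
uniformly over the other `m - 1` letters, and let `p` be the point mass at `0` (the case `ε = 0`
of `q`). Then `p` and `q` are at total variation distance `ε`, `H(Y|X)_p = 0`, and
`H(Y|X)_q = ε log₂ (m - 1) + h₂(ε)`.
-/

theorem binEntropy_zero : binEntropy 0 = 0 := by
  simp [binEntropy]

theorem binEntropy_nonneg {ε : ℝ} (hε0 : 0 ≤ ε) (hε1 : ε ≤ 1) : 0 ≤ binEntropy ε := by
  have h₁ : Real.logb 2 ε ≤ 0 := Real.logb_nonpos one_lt_two hε0 hε1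
  have h₂ : Real.logb 2 (1 - ε) ≤ 0 := Real.logb_nonpos one_lt_two (by linarith) (by linarith)
  unfold binEntropy
  nlinarith

theorem condShannonEntropy_const {𝓧 𝓨 : Type*} [Fintype 𝓧] [Unique 𝓧] [Fintype 𝓨]
    (r : 𝓨 → ℝ) (hr : ∑ y, r y = 1) :
    condShannonEntropy (fun _ : 𝓧 => r) = -∑ y, r y * Real.logb 2 (r y) := by
  simp [condShannonEntropy, hr]

section
variable {𝓨 : Type*} [Fintype 𝓨] [DecidableEq 𝓨]

theorem sum_ite_eq_add_card_sub_one_mul {R : Type*} [Ring R] (y₀ : 𝓨) (u v : R) :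
    ∑ y, (if y = y₀ then u else v) = u + ((Fintype.card 𝓨 : R) - 1) * v := by
  have hcard : 1 ≤ Fintype.card 𝓨 := Fintype.card_pos_iff.mpr ⟨y₀⟩
  rw [Fintype.sum_eq_add_sum_compl y₀, if_pos rfl,
    Finset.sum_congr rfl fun y hy => if_neg (Finset.mem_compl.mp hy ∘ Finset.mem_singleton.mpr),
    Finset.sum_const, Finset.card_compl, Finset.card_singleton, nsmul_eq_mul,
    Nat.cast_sub hcard, Nat.cast_one]

noncomputable def spreadDist (y₀ : 𝓨) (ε : ℝ) (y : 𝓨) : ℝ :=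
  if y = y₀ then 1 - ε else ε / (Fintype.card 𝓨 - 1)

variable (y₀ : 𝓨) {ε : ℝ}

theorem spreadDist_nonneg (hε0 : 0 ≤ ε) (hε1 : ε ≤ 1) (y : 𝓨) : 0 ≤ spreadDist y₀ ε y := by
  have hcard : (1 : ℝ) ≤ Fintype.card 𝓨 := mod_cast Fintype.card_pos_iff.mpr ⟨y₀⟩
  have hk : (0 : ℝ) ≤ Fintype.card 𝓨 - 1 := sub_nonneg.mpr hcard
  unfold spreadDist; split_ifs
  · linarith
  · positivity

theorem sum_spreadDist (hcard : 1 < Fintype.card 𝓨) : ∑ y, spreadDist y₀ ε y = 1 := by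
  have hk : (0 : ℝ) < Fintype.card 𝓨 - 1 := sub_pos.mpr (mod_cast hcard)
  unfold spreadDist
  rw [sum_ite_eq_add_card_sub_one_mul, mul_div_cancel₀ _ hk.ne']
  ring

theorem sum_abs_sub_spreadDist (hcard : 1 < Fintype.card 𝓨) (δ : ℝ) :
    ∑ y, |spreadDist y₀ ε y - spreadDist y₀ δ y| = 2 * |ε - δ| := by
  have hk : (0 : ℝ) < Fintype.card 𝓨 - 1 := sub_pos.mpr (mod_cast hcard)
  have hterm : ∀ y, |spreadDist y₀ ε y - spreadDist y₀ δ y| =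
      if y = y₀ then |ε - δ| else |ε - δ| / (Fintype.card 𝓨 - 1) := by
    intro y
    unfold spreadDist; split_ifs
    · rw [← abs_neg]; ring_nf
    · rw [← sub_div, abs_div, abs_of_pos hk]
  simp only [hterm, sum_ite_eq_add_card_sub_one_mul, mul_div_cancel₀ _ hk.ne']
  ring

theorem shannonEntropy_spreadDist (hcard : 1 < Fintype.card 𝓨) :
    -∑ y, spreadDist y₀ ε y * Real.logb 2 (spreadDist y₀ ε y) =
      ε * Real.logb 2 (Fintype.card 𝓨 - 1) + binEntropy ε := by
  have hk : (0 : ℝ) < Fintype.card 𝓨 - 1 := sub_pos.mpr (mod_cast hcard)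
  have hlog : ε / (Fintype.card 𝓨 - 1) * Real.logb 2 (ε / (Fintype.card 𝓨 - 1)) =
      ε / (Fintype.card 𝓨 - 1) * (Real.logb 2 ε - Real.logb 2 (Fintype.card 𝓨 - 1)) := by
    rcases eq_or_ne ε 0 with rfl | hε
    · simp
    · rw [Real.logb_div hε hk.ne']
  have hterm : ∀ y, spreadDist y₀ ε y * Real.logb 2 (spreadDist y₀ ε y) =
      if y = y₀ then (1 - ε) * Real.logb 2 (1 - ε)
      else ε / (Fintype.card 𝓨 - 1) * Real.logb 2 (ε / (Fintype.card 𝓨 - 1)) := by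
    intro y; unfold spreadDist; split_ifs <;> rfl
  simp only [hterm, sum_ite_eq_add_card_sub_one_mul, hlog, binEntropy]
  field_simp
  ring

end

/-- Optimality of the Alhejji–Smith bound: for every alphabet size m ≥ 2 and
every admissible ε there is a saturating pair of joint distributions. -/
theorem classical_conditional_entropy_bound_saturated
    (m : ℕ) (hm : 2 ≤ m) (ε : ℝ) (hε0 : 0 < ε) (hε1 : ε ≤ 1 - 1 / (m : ℝ)) :
    ∃ (𝓧 : Type) (_ : Fintype 𝓧) (𝓨 : Type) (_ : Fintype 𝓨),
      Fintype.card 𝓨 = m ∧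
      ∃ p q : 𝓧 → 𝓨 → ℝ,
        (∀ x y, 0 ≤ p x y) ∧ (∑ x, ∑ y, p x y = 1) ∧
        (∀ x y, 0 ≤ q x y) ∧ (∑ x, ∑ y, q x y = 1) ∧
        (1 / 2) * (∑ x, ∑ y, |p x y - q x y|) ≤ ε ∧
        |condShannonEntropy p - condShannonEntropy q| =
          ε * Real.logb 2 ((m : ℝ) - 1) + binEntropy ε := by
  have hcard : 1 < Fintype.card (Fin m) := by rwa [Fintype.card_fin]
  have hε1' : ε ≤ 1 := hε1.trans (by simp)
  let y₀ : Fin m := ⟨0, by omega⟩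
  have hsum (δ : ℝ) := sum_spreadDist y₀ (ε := δ) hcard
  have hentropy (δ : ℝ) := shannonEntropy_spreadDist y₀ (ε := δ) hcard
  simp only [Fintype.card_fin] at hentropy
  refine ⟨Unit, inferInstance, Fin m, inferInstance, Fintype.card_fin m,
    fun _ => spreadDist y₀ 0, fun _ => spreadDist y₀ ε,
    fun _ => spreadDist_nonneg y₀ le_rfl zero_le_one, by simp [hsum],
    fun _ => spreadDist_nonneg y₀ hε0.le hε1', by simp [hsum], ?_, ?_⟩
  · simp [sum_abs_sub_spreadDist y₀ hcard, abs_of_pos hε0]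
  · have hlog : 0 ≤ Real.logb 2 ((m : ℝ) - 1) :=
      Real.logb_nonneg one_lt_two (le_sub_iff_add_le.mpr (mod_cast hm))
    have hbin := binEntropy_nonneg hε0.le hε1'
    rw [condShannonEntropy_const _ (hsum 0), condShannonEntropy_const _ (hsum ε), hentropy,
      hentropy, binEntropy_zero, zero_mul, zero_add, zero_sub, abs_neg,
      abs_of_nonneg (by positivity)]
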